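/- The Hall density has quadratic tail decay: lim_{r→∞} r²·Ψ_H(r) = 6/π². Equivalently, for the extreme value density ρ(s) = e^{−s}·Ψ_H(e^{−s}) one has lim_{s→−∞} e^{|s|}·ρ(s) = 6/π². -/

import Mathlib

noncomputable section
open MeasureTheory Filter Topology

/-- The Hall density `Ψ_H` for the gap distribution of the Farey sequence. -/
def PsiH (r : ℝ) : ℝ :=
  if r < 1 then 3 / Real.pi ^ 2
  else if r ≤ 4 then (3 / Real.pi ^ 2) * (-1 + 2 / r + (2 / r) * Real.log r)
  else (3 / Real.pi ^ 2) *
    (-1 + 2 / r + 2 * Real.sqrt (1 / 4 - 1 / r)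
      - (4 / r) * Real.log (1 / 2 + Real.sqrt (1 / 4 - 1 / r)))

theorem psiH_main_limit :
    Tendsto (fun r : ℝ => r ^ 2 * PsiH r) atTop (𝓝 (6 / Real.pi ^ 2)) := by
  unfold PsiH
  set q : ℝ → ℝ := fun r => Real.sqrt (1 / 4 - 1 / r) with hqdef
  set t : ℝ → ℝ := fun r => 1 / 2 + q r with htdef
  have hA : Tendsto (fun r : ℝ => (1:ℝ)/4 - 1/r) atTop (𝓝 (1/4)) := by
    simpa [one_div] using tendsto_const_nhds.sub (tendsto_inv_atTop_zero (𝕜 := ℝ))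
  have hq : Tendsto q atTop (𝓝 (1/2)) := by
    have h := (Real.continuous_sqrt.tendsto (1/4)).comp hA
    have h14 : Real.sqrt (1/4) = 1/2 := by
      rw [show (1/4:ℝ) = (1/2)^2 by norm_num, Real.sqrt_sq (by norm_num)]
    rw [h14] at h
    exact h
  have ht : Tendsto t atTop (𝓝 1) := by
    have h := ((tendsto_const_nhds (x := (1/2:ℝ))).add hq)
    norm_num at h
    exact h
  have hrt : Tendsto (fun r => r * t r) atTop atTop := by
    apply tendsto_atTop_mono' _ _ (tendsto_id.atTop_div_const (by norm_num : (0:ℝ) < 2))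
    filter_upwards [eventually_ge_atTop (0:ℝ)] with r hr
    have hq0 : 0 ≤ q r := Real.sqrt_nonneg _
    show r / 2 ≤ r * t r
    rw [show r / 2 = r * (1/2) by ring]
    exact mul_le_mul_of_nonneg_left (by simp [htdef]; linarith) hr
  have hlog : Tendsto (fun r => (r * t r) * Real.log (1 + (-1)/(r * t r))) atTop (𝓝 (-1)) :=
    (Real.tendsto_mul_log_one_add_div_atTop (-1)).comp hrt
  have hg : Tendsto (fun r => (3/Real.pi^2) * (-2/(t r)^2 - 4/(t r) *
      ((r * t r) * Real.log (1 + (-1)/(r * t r))))) atTop (𝓝 (6 / Real.pi^2)) := by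
    have h1 : Tendsto (fun r => -2/(t r)^2 - 4/(t r) *
        ((r * t r) * Real.log (1 + (-1)/(r * t r)))) atTop (𝓝 (2:ℝ)) := by
      have h2 := ((tendsto_const_nhds (x := (-2:ℝ))).div (ht.pow 2) (by norm_num)).sub
        (((tendsto_const_nhds (x := (4:ℝ))).div ht (by norm_num)).mul hlog)
      norm_num at h2 ⊢
      exact h2
    have h3 := (tendsto_const_nhds (x := (3/Real.pi^2))).mul h1
    convert h3 using 2
    ring
  refine Tendsto.congr' ?_ hg
  filter_upwards [eventually_gt_atTop (4:ℝ)] with r hr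
  have hr0 : (0:ℝ) < r := by linarith
  have hrne : r ≠ 0 := ne_of_gt hr0
  have hnlt : ¬ r < 1 := by linarith
  have hnle : ¬ r ≤ 4 := by linarith
  have hq2 : (q r)^2 = 1/4 - 1/r := Real.sq_sqrt (by
    rw [sub_nonneg, div_le_div_iff₀ hr0 (by norm_num)]; linarith)
  have hq2' : (q r)^2 * r = r/4 - 1 := by
    rw [hq2]; field_simp
  have hq0 : 0 ≤ q r := Real.sqrt_nonneg _
  have ht0 : (0:ℝ) < t r := by simp only [htdef]; positivity
  have htne : t r ≠ 0 := ne_of_gt ht0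
  have hrt0 : r * t r ≠ 0 := by positivity
  have ht2 : r * (t r)^2 = r * t r - 1 := by
    simp only [htdef]; linear_combination hq2'
  have hteq : 1 + (-1)/(r * t r) = t r := by
    field_simp
    linear_combination -ht2
  simp only [hnlt, hnle, if_false, hteq]
  symm
  show r ^ 2 * ((3/Real.pi^2) * (-1 + 2/r + 2 * q r - 4/r * Real.log (t r)))
      = (3/Real.pi^2) * (-2/(t r)^2 - 4/(t r) * ((r * t r) * Real.log (t r)))
  set L := Real.log (t r) with hL
  clear_value L
  show r ^ 2 * ((3/Real.pi^2) * (-1 + 2/r + 2 * q r - 4/r * L))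
      = (3/Real.pi^2) * (-2/(1/2 + q r)^2 - 4/(1/2 + q r) * ((r * (1/2 + q r)) * L))
  generalize hQ : q r = Q at hq2' hq0 ⊢
  have key : (-r^2 + 2*r + 2*Q*r^2) * (1/2 + Q)^2 = -2 := by
    linear_combination (2*r*Q + r + 2) * hq2'
  have hT0 : (1:ℝ)/2 + Q ≠ 0 := by positivity
  have e1 : 4/(1/2+Q) * ((r*(1/2+Q))*L) = 4*r*L := by
    field_simp
  have e2 : -2/((1:ℝ)/2+Q)^2 = -r^2 + 2*r + 2*Q*r^2 := by
    field_simp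
    linear_combination -4 * key
  have e3 : r^2 * (-1 + 2/r + 2*Q - 4/r*L) = -r^2 + 2*r + 2*Q*r^2 - 4*r*L := by
    field_simp
  calc r ^ 2 * ((3/Real.pi^2) * (-1 + 2/r + 2*Q - 4/r*L))
      = (3/Real.pi^2) * (r^2 * (-1 + 2/r + 2*Q - 4/r*L)) := by ring
    _ = (3/Real.pi^2) * (-2/((1:ℝ)/2+Q)^2 - 4/(1/2+Q) * ((r*(1/2+Q))*L)) := by
        rw [e3, e2, e1]

/-- Quadratic tail decay of the Hall density: `r²·Ψ_H(r) → 6/π²` as `r → ∞`;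
equivalently, for `ρ(s) = e^{-s} Ψ_H(e^{-s})`, `e^{|s|}·ρ(s) → 6/π²` as `s → -∞`. -/
theorem statement17 :
    Tendsto (fun r : ℝ => r ^ 2 * PsiH r) atTop (𝓝 (6 / Real.pi ^ 2)) ∧
    Tendsto (fun s : ℝ => Real.exp |s| * (Real.exp (-s) * PsiH (Real.exp (-s))))
      atBot (𝓝 (6 / Real.pi ^ 2)) := by
  refine ⟨psiH_main_limit, ?_⟩
  have hcomp : Tendsto (fun s : ℝ => (Real.exp (-s)) ^ 2 * PsiH (Real.exp (-s)))
      atBot (𝓝 (6 / Real.pi ^ 2)) :=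
    psiH_main_limit.comp (Real.tendsto_exp_atTop.comp tendsto_neg_atBot_atTop)
  refine Tendsto.congr' ?_ hcomp
  filter_upwards [eventually_le_atBot (0:ℝ)] with s hs
  rw [abs_of_nonpos hs]
  ring
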